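/- arXiv:1008.2013 — 6 statements merged into one kernel-verified Lean document; each statement's English description precedes it below -/
import Mathlib

section
/- Let X be a Banach space with a topological direct sum decomposition X = U ⊕ V, and let π : X → U be the projection onto U along V. Let U' ⊆ X be a closed subspace such that the restriction π|_{U'} : U' → U is a Fredholm operator. Then U' decomposes as U' = {x + Tx : x ∈ π(U')} ⊕ F, where F = ker(π|_{U'}) is finite dimensional and T : π(U') → V is a bounded linear operator. Consequently, U' is a complemented subspace of X. -/
/-!
Let `F = U' ⊓ ker π` and `W = π(U')`. Being finite dimensional, `F` has a continuous projection
`e`, and `G = U' ⊓ ker e` is a closed complement of `F` in `U'`. Then `π` maps the Banach space `G`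
bijectively onto the Banach space `W`, so by the open mapping theorem it has a continuous inverse
`σ : W → G`. Since `W` is closed of finite codimension in `range π`, it has a continuous projection
`q` with `q ∘ π = q`. The operator `T = (σ - id) ∘ q` takes `W` into `ker π`, and its graph over `W`
is `σ(W) = G`. Finally `σ ∘ q` projects onto `G` and kills `F`, while `e` projects onto `F` and
kills `G`, so `σ ∘ q + e` is a continuous projection onto `G ⊕ F = U'`.
-/

/-- The restriction of the continuous linear map `q` to the subspace `S`, viewed as a map
into the range of `q`, is Fredholm: finite-dimensional kernel, closed image, and image of
finite codimension in `LinearMap.range q`. -/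
def IsFredholmRestriction {X : Type*} [NormedAddCommGroup X] [NormedSpace ℝ X]
    (q : X →L[ℝ] X) (S : Submodule ℝ X) : Prop :=
  FiniteDimensional ℝ ↥(S ⊓ LinearMap.ker (q : X →ₗ[ℝ] X)) ∧
    IsClosed ((S.map (q : X →ₗ[ℝ] X) : Submodule ℝ X) : Set X) ∧
    FiniteDimensional ℝ
      (↥(LinearMap.range (q : X →ₗ[ℝ] X)) ⧸ (S.map (q : X →ₗ[ℝ] X)).comap (LinearMap.range (q : X →ₗ[ℝ] X)).subtype)

open LinearMap

namespace LinearMap.IsProj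

theorem add_of_le_ker {R M : Type*} [Semiring R] [AddCommMonoid M] [Module R M]
    {p q : Submodule R M} {f g : M →ₗ[R] M} (hf : IsProj p f) (hg : IsProj q g)
    (hqf : q ≤ ker f) (hpg : p ≤ ker g) : IsProj (p ⊔ q) (f + g) where
  map_mem x := add_mem (Submodule.mem_sup_left (hf.map_mem x))
    (Submodule.mem_sup_right (hg.map_mem x))
  map_id x hx := by
    obtain ⟨y, hy, z, hz, rfl⟩ := Submodule.mem_sup.1 hx
    simp only [add_apply, map_add, hf.map_id y hy, hg.map_id z hz, mem_ker.1 (hqf hz),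
      mem_ker.1 (hpg hy), add_zero, zero_add]

theorem inf_ker_sup_eq {R E : Type*} [Ring R] [AddCommGroup E] [Module R E]
    {p U : Submodule R E} {f : E →ₗ[R] E} (hf : IsProj p f) (hpU : p ≤ U) :
    U ⊓ ker f ⊔ p = U := by
  rw [sup_comm, inf_comm, ← sup_inf_assoc_of_le _ hpU, hf.isCompl.sup_eq_top, top_inf_eq]

end LinearMap.IsProj

theorem Submodule.ClosedComplemented.exists_isProj {R M : Type*} [Ring R] [TopologicalSpace M]
    [AddCommGroup M] [Module R M] {p : Submodule R M} (hp : p.ClosedComplemented) :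
    ∃ e : M →L[R] M, IsProj p (e : M →ₗ[R] M) := by
  obtain ⟨f, hf⟩ := hp
  exact ⟨p.subtypeL ∘L f, fun x => (f x).2, fun x hx => congr($(hf ⟨x, hx⟩).1)⟩

namespace ContinuousLinearMap

section

variable {R M : Type*} [Ring R] [TopologicalSpace M] [AddCommGroup M] [Module R M]

theorem IsIdempotentElem.apply_eq_self_of_mem_range {π : M →L[R] M} (hπ : IsIdempotentElem π)
    {x : M} (hx : x ∈ range (π : M →ₗ[R] M)) : π x = x := by
  obtain ⟨y, rfl⟩ := hx
  exact congr($hπ y)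

theorem IsIdempotentElem.exists_proj_comp_eq_of_le_range {π : M →L[R] M}
    (hπ : IsIdempotentElem π) {W : Submodule R M} (hWπ : W ≤ range (π : M →ₗ[R] M))
    (hW : (W.comap (range (π : M →ₗ[R] M)).subtype).ClosedComplemented) :
    ∃ q : M →L[R] W, (∀ w : W, q w = w) ∧ ∀ x, q (π x) = q x := by
  obtain ⟨q₀, hq₀⟩ := hW
  let N := range (π : M →ₗ[R] M)
  let πN : M →L[R] N := π.codRestrict N (mem_range_self (π : M →ₗ[R] M))
  have hπN : ∀ x (hx : x ∈ N), πN x = ⟨x, hx⟩ := fun x hx =>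
    Subtype.ext (IsIdempotentElem.apply_eq_self_of_mem_range hπ hx)
  refine ⟨(N.subtypeL ∘L Submodule.subtypeL _ ∘L q₀ ∘L πN).codRestrict W fun x => (q₀ (πN x)).2,
    fun w => Subtype.ext ?_, fun x => Subtype.ext ?_⟩
  · show ((q₀ (πN w) : N) : M) = w
    rw [hπN w (hWπ w.2), hq₀ ⟨⟨w, hWπ w.2⟩, w.2⟩]
  · show ((q₀ (πN (π x)) : N) : M) = q₀ (πN x)
    rw [hπN (π x) (mem_range_self _ x)]
    rfl

theorem isProj_comp_of_range_eq {π : M →L[R] M} {W G : Submodule R M} {σ : W →L[R] M}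
    {q : M →L[R] W} (hσ : range (σ : W →ₗ[R] M) = G) (hπσ : ∀ w, π (σ w) = w)
    (hq : ∀ w : W, q w = w) (hqπ : ∀ x, q (π x) = q x) :
    IsProj G ((σ ∘L q : M →L[R] M) : M →ₗ[R] M) where
  map_mem x := hσ ▸ mem_range_self _ (q x)
  map_id x hx := by
    obtain ⟨w, rfl⟩ := hσ ▸ hx
    show σ (q (σ w)) = σ w
    rw [← hqπ, hπσ, hq]

theorem map_id_add_sub_subtypeL_comp_eq_range [IsTopologicalAddGroup M] {W : Submodule R M}
    {q : M →L[R] W} (hq : ∀ w : W, q w = w) (σ : W →L[R] M) :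
    W.map ((ContinuousLinearMap.id R M + (σ - W.subtypeL) ∘L q : M →L[R] M) : M →ₗ[R] M) =
      range (σ : W →ₗ[R] M) := by
  have key : ∀ w : W, (ContinuousLinearMap.id R M + (σ - W.subtypeL) ∘L q) w = σ w := fun w => by
    simp [hq]
  ext y
  constructor
  · rintro ⟨w, hw, rfl⟩
    exact ⟨⟨w, hw⟩, (key ⟨w, hw⟩).symm⟩
  · rintro ⟨w, rfl⟩
    exact ⟨w, w.2, key w⟩

end

variable {𝕜 E F : Type*} [NontriviallyNormedField 𝕜]
  [NormedAddCommGroup E] [NormedSpace 𝕜 E] [NormedAddCommGroup F] [NormedSpace 𝕜 F]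

/-- By the open mapping theorem, applied to `f` restricted to `G`. -/
theorem exists_section_of_disjoint_ker (f : E →L[𝕜] F)
    {G : Submodule 𝕜 E} {W : Submodule 𝕜 F} [CompleteSpace G] [CompleteSpace W]
    (hGW : G.map (f : E →ₗ[𝕜] F) = W) (hG : Disjoint G (ker (f : E →ₗ[𝕜] F))) :
    ∃ σ : W →L[𝕜] E, range (σ : W →ₗ[𝕜] E) = G ∧ ∀ w, f (σ w) = w := by
  have hmaps : ∀ x ∈ G, f x ∈ W := fun x hx => hGW ▸ Submodule.mem_map_of_mem hx
  let φ := ContinuousLinearEquiv.ofBijective (f.restrict hmaps)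
    (ker_eq_bot'.2 fun g hg => Subtype.ext <|
      Submodule.disjoint_def.1 hG g g.2 (mem_ker.2 congr($hg.1)))
    (range_eq_top.2 fun ⟨w, hw⟩ => by
      obtain ⟨g, hg, rfl⟩ := hGW ▸ hw
      exact ⟨⟨g, hg⟩, rfl⟩)
  refine ⟨G.subtypeL ∘L (φ.symm : W →L[𝕜] G), le_antisymm ?_ fun g hg => ?_,
    fun w => congr($(φ.apply_symm_apply w).1)⟩
  · rintro _ ⟨w, rfl⟩
    exact (φ.symm w).2
  · exact ⟨φ ⟨g, hg⟩, congr($(φ.symm_apply_apply ⟨g, hg⟩).1)⟩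

end ContinuousLinearMap

theorem fredholm_projection_graph_decomposition_general
    {X : Type*} [NormedAddCommGroup X] [NormedSpace ℝ X] [CompleteSpace X]
    (V : Submodule ℝ X)
    (π : X →L[ℝ] X) (hidem : IsIdempotentElem π)
    (hker : LinearMap.ker (π : X →ₗ[ℝ] X) = V)
    (U' : Submodule ℝ X) (hU'c : IsClosed (U' : Set X))
    (hFred : IsFredholmRestriction π U') :
    -- `F := U' ⊓ ker π` is finite dimensional
    FiniteDimensional ℝ ↥(U' ⊓ LinearMap.ker (π : X →ₗ[ℝ] X)) ∧
      ∃ T : X →L[ℝ] X,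
        -- `T` maps `π(U')` into `V`
        (∀ x ∈ U'.map (π : X →ₗ[ℝ] X), T x ∈ V) ∧
        -- `U' = {x + Tx : x ∈ π(U')} ⊕ F`
        Disjoint ((U'.map (π : X →ₗ[ℝ] X)).map ((ContinuousLinearMap.id ℝ X + T : X →L[ℝ] X) : X →ₗ[ℝ] X))
          (U' ⊓ LinearMap.ker (π : X →ₗ[ℝ] X)) ∧
        ((U'.map (π : X →ₗ[ℝ] X)).map ((ContinuousLinearMap.id ℝ X + T : X →L[ℝ] X) : X →ₗ[ℝ] X)) ⊔ (U' ⊓ LinearMap.ker (π : X →ₗ[ℝ] X)) = U' ∧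
        -- consequently `U'` is complemented: it is the range of a continuous projection
        ∃ ρ : X →L[ℝ] X, IsIdempotentElem ρ ∧ LinearMap.range (ρ : X →ₗ[ℝ] X) = U' := by
  subst hker
  obtain ⟨hF, hWc, hcodim⟩ := hFred
  set F := U' ⊓ ker (π : X →ₗ[ℝ] X)
  obtain ⟨e, he⟩ := Submodule.ClosedComplemented.exists_isProj (.of_finiteDimensional F)
  set G := U' ⊓ ker (e : X →ₗ[ℝ] X)
  have hGF : G ⊔ F = U' := he.inf_ker_sup_eq inf_le_left
  have hGW : G.map (π : X →ₗ[ℝ] X) = U'.map (π : X →ₗ[ℝ] X) := by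
    conv_rhs => rw [← hGF]
    rw [Submodule.map_sup, le_ker_iff_map.1 inf_le_right, sup_bot_eq]
  have : CompleteSpace G := (hU'c.inter e.isClosed_ker).completeSpace_coe
  have : CompleteSpace (U'.map (π : X →ₗ[ℝ] X)) := hWc.completeSpace_coe
  obtain ⟨σ, hσG, hπσ⟩ := π.exists_section_of_disjoint_ker hGW <|
    Submodule.disjoint_def.2 fun x hxG hxπ => (he.map_id x ⟨hxG.1, hxπ⟩).symm.trans hxG.2
  obtain ⟨q, hq, hqπ⟩ := ContinuousLinearMap.IsIdempotentElem.exists_proj_comp_eq_of_le_range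
    hidem map_le_range (.of_finiteDimensional_quotient (hWc.preimage continuous_subtype_val))
  have hFP : F ≤ ker ((σ ∘L q : X →L[ℝ] X) : X →ₗ[ℝ] X) := fun x hx =>
    show σ (q x) = 0 by rw [← hqπ x, show π x = 0 from hx.2, map_zero, map_zero]
  have hρ : IsProj U' ((σ ∘L q + e : X →L[ℝ] X) : X →ₗ[ℝ] X) := by
    have := (ContinuousLinearMap.isProj_comp_of_range_eq hσG hπσ hq hqπ).add_of_le_ker he hFP
      inf_le_right
    rwa [hGF] at this
  refine ⟨hF, (σ - Submodule.subtypeL _) ∘L q, fun x hx => ?_, ?_, ?_, σ ∘L q + e,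
    ContinuousLinearMap.isIdempotentElem_toLinearMap_iff.1 hρ.isIdempotentElem, hρ.range⟩
  · simp [hq ⟨x, hx⟩, hπσ,
      ContinuousLinearMap.IsIdempotentElem.apply_eq_self_of_mem_range hidem (map_le_range hx)]
  · rw [ContinuousLinearMap.map_id_add_sub_subtypeL_comp_eq_range hq, hσG]
    exact he.isCompl.disjoint.symm.mono_left inf_le_right
  · rw [ContinuousLinearMap.map_id_add_sub_subtypeL_comp_eq_range hq, hσG, hGF]

theorem fredholm_projection_graph_decomposition
    {X : Type*} [NormedAddCommGroup X] [NormedSpace ℝ X] [CompleteSpace X]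
    (U V : Submodule ℝ X) (hUc : IsClosed (U : Set X)) (hVc : IsClosed (V : Set X))
    (π : X →L[ℝ] X) (hidem : IsIdempotentElem π)
    (hrange : LinearMap.range (π : X →ₗ[ℝ] X) = U) (hker : LinearMap.ker (π : X →ₗ[ℝ] X) = V)
    (U' : Submodule ℝ X) (hU'c : IsClosed (U' : Set X))
    (hFred : IsFredholmRestriction π U') :
    -- `F := U' ⊓ ker π` is finite dimensional
    FiniteDimensional ℝ ↥(U' ⊓ LinearMap.ker (π : X →ₗ[ℝ] X)) ∧
      ∃ T : X →L[ℝ] X,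
        -- `T` maps `π(U')` into `V`
        (∀ x ∈ U'.map (π : X →ₗ[ℝ] X), T x ∈ V) ∧
        -- `U' = {x + Tx : x ∈ π(U')} ⊕ F`
        Disjoint ((U'.map (π : X →ₗ[ℝ] X)).map ((ContinuousLinearMap.id ℝ X + T : X →L[ℝ] X) : X →ₗ[ℝ] X))
          (U' ⊓ LinearMap.ker (π : X →ₗ[ℝ] X)) ∧
        ((U'.map (π : X →ₗ[ℝ] X)).map ((ContinuousLinearMap.id ℝ X + T : X →L[ℝ] X) : X →ₗ[ℝ] X)) ⊔ (U' ⊓ LinearMap.ker (π : X →ₗ[ℝ] X)) = U' ∧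
        -- consequently `U'` is complemented: it is the range of a continuous projection
        ∃ ρ : X →L[ℝ] X, IsIdempotentElem ρ ∧ LinearMap.range (ρ : X →ₗ[ℝ] X) = U' :=
  fredholm_projection_graph_decomposition_general V π hidem hker U' hU'c hFred
end

section
/- Let X = U ⊕ V be a topological direct sum of a Banach space, let π : X → U be the projection along V, and let U' ⊆ X be a closed subspace with π|_{U'} : U' → U Fredholm, so that U' = {x + Tx : x ∈ π(U')} ⊕ F with F finite dimensional and T : π(U') → V bounded. Then U' is commensurate with U (i.e., the projection of U' to U is Fredholm and the projection of U' to any complement of U is compact) if and only if the operator T is compact. Moreover, in this case U is also commensurate with U', so commensurability is a symmetric relation. -/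
/-- `S` is commensurate with (is a compact perturbation of) the range of the continuous
idempotent `q`: the projection of `S` onto `range q` is Fredholm and the projection of
`S` onto the complement `ker q` is a compact operator. -/
def Commensurate {X : Type*} [NormedAddCommGroup X] [NormedSpace ℝ X]
    (q : X →L[ℝ] X) (S : Submodule ℝ X) : Prop :=
  IsFredholmRestriction q S ∧
    IsCompactOperator ((ContinuousLinearMap.id ℝ X - q).comp S.subtypeL)

open LinearMap (ker range)

theorem isIdempotentElem_one_add_mul {R : Type*} [Ring R] {p t : R} (hp : IsIdempotentElem p)
    (h : p * t * p = 0) : IsIdempotentElem ((1 + t) * p) := by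
  unfold IsIdempotentElem at *
  calc (1 + t) * p * ((1 + t) * p) = (1 + t) * (p * p + p * t * p) := by noncomm_ring
    _ = (1 + t) * p := by rw [hp, h, add_zero]

theorem isIdempotentElem_add_mul_one_sub {R : Type*} [Ring R] {a b : R} (ha : IsIdempotentElem a)
    (hb : IsIdempotentElem b) (hab : a * b = 0) : IsIdempotentElem (a + b * (1 - a)) := by
  have h₁ : (1 - a) * a = 0 := by rw [sub_mul, one_mul, ha.eq, sub_self]
  have h₂ : (1 - a) * b = b := by rw [sub_mul, one_mul, hab, sub_zero]
  calc (a + b * (1 - a)) * (a + b * (1 - a))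
      = a * a + a * b * (1 - a) + b * ((1 - a) * a) + b * ((1 - a) * b) * (1 - a) := by noncomm_ring
    _ = a + b * (1 - a) := by rw [ha.eq, hab, h₁, h₂, hb.eq]; noncomm_ring

section LinearAlgebra

variable {𝕜 M : Type*} [Field 𝕜] [AddCommGroup M] [Module 𝕜 M]

theorem Submodule.finiteDimensional_of_le_of_disjoint {S U W : Submodule 𝕜 M}
    [FiniteDimensional 𝕜 (U ⧸ W.comap U.subtype)] (hSU : S ≤ U) (hSW : Disjoint S W) :
    FiniteDimensional 𝕜 S := by
  refine Module.Finite.of_injective ((W.comap U.subtype).mkQ ∘ₗ Submodule.inclusion hSU) ?_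
  rw [← LinearMap.ker_eq_bot, eq_bot_iff]
  intro s hs
  have hsW : (s : M) ∈ W := by simpa [Submodule.Quotient.mk_eq_zero] using hs
  simpa using hSW.le_bot ⟨s.2, hsW⟩

theorem Submodule.finiteDimensional_quotient_of_le_sup {S P F : Submodule 𝕜 M}
    [FiniteDimensional 𝕜 F] (hFS : F ≤ S) (hS : S ≤ P ⊔ F) :
    FiniteDimensional 𝕜 (S ⧸ P.comap S.subtype) := by
  refine Module.Finite.of_surjective ((P.comap S.subtype).mkQ ∘ₗ Submodule.inclusion hFS) ?_
  intro q
  obtain ⟨s, rfl⟩ := Submodule.mkQ_surjective _ q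
  obtain ⟨p, hp, f, hf, hpf⟩ := Submodule.mem_sup.1 (hS s.2)
  refine ⟨⟨f, hf⟩, (Submodule.Quotient.eq _).2 ?_⟩
  have : f - (s : M) = -p := by rw [← hpf]; abel
  simpa [this] using hp

end LinearAlgebra

section Operators

variable {𝕜 X Y : Type*} [RCLike 𝕜] [NormedAddCommGroup X] [NormedSpace 𝕜 X]
  [NormedAddCommGroup Y] [NormedSpace 𝕜 Y]

theorem isCompactOperator_of_forall_mem {F : Submodule 𝕜 X} [FiniteDimensional 𝕜 F]
    (f : Y →L[𝕜] X) (hf : ∀ y, f y ∈ F) : IsCompactOperator f :=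
  (isCompactOperator_of_locallyCompactSpace_dom (f.codRestrict F hf)).clm_comp F.subtypeL

theorem isCompactOperator_mul_of_forall_mem {W : Submodule 𝕜 X} {T P : X →L[𝕜] X}
    (hT : IsCompactOperator (T.comp W.subtypeL)) (hP : ∀ x, P x ∈ W) :
    IsCompactOperator (T * P) :=
  hT.comp_clm (P.codRestrict W hP)

theorem Submodule.isClosed_map_of_leftInverseOn {W : Submodule 𝕜 X} (hW : IsClosed (W : Set X))
    (f : X →L[𝕜] Y) (g : Y →L[𝕜] X) (hgf : ∀ w ∈ W, g (f w) = w) :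
    IsClosed (W.map (f : X →ₗ[𝕜] Y) : Set Y) := by
  have : (W.map (f : X →ₗ[𝕜] Y) : Set Y) = {y | f (g y) = y} ∩ g ⁻¹' W := by
    ext y
    constructor
    · rintro ⟨w, hw, rfl⟩
      simp [hgf w hw, hw]
    · rintro ⟨hy, hgy⟩
      exact ⟨g y, hgy, hy⟩
  rw [this]
  exact (isClosed_eq (by fun_prop) continuous_id).inter (hW.preimage g.continuous)

theorem exists_projection_onto_of_le_range {π : X →L[𝕜] X} (hπ : IsIdempotentElem π)
    {W : Submodule 𝕜 X} (hWπ : W ≤ range (π : X →ₗ[𝕜] X)) (hWc : IsClosed (W : Set X))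
    [FiniteDimensional 𝕜 (range (π : X →ₗ[𝕜] X) ⧸ W.comap (range (π : X →ₗ[𝕜] X)).subtype)] :
    ∃ P : X →L[𝕜] X, (∀ x, P x ∈ W) ∧ (∀ w ∈ W, P w = w) ∧ P * π = P := by
  obtain ⟨f, hf⟩ := Submodule.ClosedComplemented.of_finiteDimensional_quotient
    (p := W.comap (range (π : X →ₗ[𝕜] X)).subtype) (hWc.preimage continuous_subtype_val)
  let πr := π.codRestrict (range (π : X →ₗ[𝕜] X)) (LinearMap.mem_range_self (π : X →ₗ[𝕜] X))
  have hπr : ∀ x, πr (π x) = πr x := fun x => Subtype.ext (congr($hπ x))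
  refine ⟨(range (π : X →ₗ[𝕜] X)).subtypeL ∘L (W.comap _).subtypeL ∘L f ∘L πr,
    fun x => (f (πr x)).2, fun w hw => ?_, ContinuousLinearMap.ext fun x => ?_⟩
  · have hπw : πr w = ⟨w, hWπ hw⟩ := by
      obtain ⟨y, rfl⟩ := hWπ hw
      exact Subtype.ext congr($hπ y)
    change ((f (πr w) : range (π : X →ₗ[𝕜] X)) : X) = w
    rw [hπw, hf ⟨_, hw⟩]
  · simp [hπr]

theorem IsCompactOperator.comp_subtype_of_sub_mem {K L : X →L[𝕜] Y} {S : Submodule 𝕜 X}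
    {F : Submodule 𝕜 Y} [FiniteDimensional 𝕜 F] (hL : IsCompactOperator L)
    (hF : ∀ u ∈ S, K u - L u ∈ F) : IsCompactOperator (K.comp S.subtypeL) := by
  have : K.comp S.subtypeL = L.comp S.subtypeL + (K - L).comp S.subtypeL := by ext; simp
  rw [this]
  exact (hL.comp_clm _).add (isCompactOperator_of_forall_mem _ fun u => hF u u.2)

theorem isCompactOperator_comp_subtype_of_graph_le {π T : X →L[𝕜] X} {W S : Submodule 𝕜 X}
    (hK : IsCompactOperator ((ContinuousLinearMap.id 𝕜 X - π).comp S.subtypeL))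
    (hWS : ∀ w ∈ W, w + T w ∈ S) (hπW : ∀ w ∈ W, π (w + T w) = w) :
    IsCompactOperator (T.comp W.subtypeL) := by
  have : T.comp W.subtypeL = ((ContinuousLinearMap.id 𝕜 X - π).comp S.subtypeL).comp
      (((ContinuousLinearMap.id 𝕜 X + T).comp W.subtypeL).codRestrict S fun w => hWS w w.2) := by
    ext w
    simp [hπW w w.2]
  rw [this]
  exact hK.comp_clm _

theorem ContinuousLinearMap.range_add_mul_one_sub {a b : X →L[𝕜] X} (ha : IsIdempotentElem a)
    (hb : IsIdempotentElem b) (hab : a * b = 0) :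
    range ((a + b * (1 - a) : X →L[𝕜] X) : X →ₗ[𝕜] X) =
      range (a : X →ₗ[𝕜] X) ⊔ range (b : X →ₗ[𝕜] X) := by
  have hρa : (a + b * (1 - a)) * a = a := by
    rw [add_mul, mul_assoc, sub_mul, one_mul, ha.eq, sub_self, mul_zero, add_zero]
  have hρb : (a + b * (1 - a)) * b = b := by
    rw [add_mul, mul_assoc, sub_mul, one_mul, hab, sub_zero, hb.eq, zero_add]
  apply le_antisymm
  · rintro _ ⟨x, rfl⟩
    exact Submodule.add_mem_sup ⟨x, rfl⟩ ⟨(1 - a) x, rfl⟩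
  · refine sup_le ?_ ?_ <;> rintro _ ⟨x, rfl⟩
    · exact ⟨a x, congr($hρa x)⟩
    · exact ⟨b x, congr($hρb x)⟩

variable {π P : X →L[𝕜] X} {W : Submodule 𝕜 X}
  [FiniteDimensional 𝕜 (range (π : X →ₗ[𝕜] X) ⧸ W.comap (range (π : X →ₗ[𝕜] X)).subtype)]

theorem finiteDimensional_range_inf_ker (hP : ∀ w ∈ W, P w = w) :
    FiniteDimensional 𝕜 ↥(range (π : X →ₗ[𝕜] X) ⊓ ker (P : X →ₗ[𝕜] X)) := by
  refine Submodule.finiteDimensional_of_le_of_disjoint (W := W) inf_le_left ?_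
  rw [Submodule.disjoint_def]
  intro x hx hxW
  rw [← hP x hxW]
  exact hx.2

theorem isClosed_map_range_of_leftInverseOn {ρ : X →L[𝕜] X} (hWπ : W ≤ range (π : X →ₗ[𝕜] X))
    (hWc : IsClosed (W : Set X)) (hπρ : ∀ w ∈ W, π (ρ w) = w) :
    IsClosed ((range (π : X →ₗ[𝕜] X)).map (ρ : X →ₗ[𝕜] X) : Set X) := by
  have hmap : (W.comap (range (π : X →ₗ[𝕜] X)).subtype).map
      ((ρ : X →ₗ[𝕜] X) ∘ₗ (range (π : X →ₗ[𝕜] X)).subtype) = W.map (ρ : X →ₗ[𝕜] X) := by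
    rw [Submodule.map_comp, Submodule.map_comap_subtype, inf_eq_right.2 hWπ]
  have := LinearMap.isClosed_range_of_isClosed_map_of_finiteDimensional_quotient
    (hmap ▸ W.isClosed_map_of_leftInverseOn hWc ρ π hπρ)
  rwa [LinearMap.range_comp, Submodule.range_subtype] at this

end Operators

section Commensurability

variable {X : Type*} [NormedAddCommGroup X] [NormedSpace ℝ X]

theorem commensurate_range_of_mul_eq {π P T σ ρ : X →L[ℝ] X} {W F : Submodule ℝ X}
    (hWπ : W ≤ range (π : X →ₗ[ℝ] X)) (hWc : IsClosed (W : Set X))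
    [FiniteDimensional ℝ (range (π : X →ₗ[ℝ] X) ⧸ W.comap (range (π : X →ₗ[ℝ] X)).subtype)]
    (hPW : ∀ x, P x ∈ W) (hPfix : ∀ w ∈ W, P w = w) (hTP : IsCompactOperator (T * P))
    [FiniteDimensional ℝ F] (hσF : ∀ x, σ x ∈ F) (hFρ : F ≤ range (ρ : X →ₗ[ℝ] X))
    (hπρ : π * ρ = P) (hρπ : ρ = ρ * π + σ * (1 - π))
    (hρ : 1 - ρ = (1 - σ) * (1 - (1 + T) * P)) :
    Commensurate ρ (range (π : X →ₗ[ℝ] X)) := by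
  have hUP := finiteDimensional_range_inf_ker (π := π) hPfix
  refine ⟨⟨?_, ?_, ?_⟩, ?_⟩
  · have hker : ker (ρ : X →ₗ[ℝ] X) ≤ ker (P : X →ₗ[ℝ] X) := fun x hx => by
      change P x = 0
      rw [← hπρ, mul_apply_eq_comp, show ρ x = 0 from hx, map_zero]
    exact Submodule.finiteDimensional_of_le (inf_le_inf_left _ hker)
  · exact isClosed_map_range_of_leftInverseOn hWπ hWc fun w hw => by
      rw [← mul_apply_eq_comp, hπρ, hPfix w hw]
  · refine Submodule.finiteDimensional_quotient_of_le_sup hFρ ?_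
    rintro _ ⟨x, rfl⟩
    have hx : ρ x = ρ (π x) + σ (x - π x) := by simpa using congr($hρπ x)
    rw [ContinuousLinearMap.coe_coe, hx]
    exact Submodule.add_mem_sup ⟨π x, ⟨x, rfl⟩, rfl⟩ (hσF _)
  · have hAU : IsCompactOperator ((1 - (1 + T) * P).comp (range (π : X →ₗ[ℝ] X)).subtypeL) := by
      refine IsCompactOperator.comp_subtype_of_sub_mem (L := -(T * P))
        (F := range (π : X →ₗ[ℝ] X) ⊓ ker (P : X →ₗ[ℝ] X)) hTP.neg fun u hu => ?_
      have hu' : (1 - (1 + T) * P) u - (-(T * P)) u = u - P u := by simp; abel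
      rw [hu']
      refine ⟨sub_mem hu (hWπ (hPW u)), ?_⟩
      change P (u - P u) = 0
      rw [map_sub, hPfix _ (hPW u), sub_self]
    rw [← ContinuousLinearMap.one_def, hρ]
    exact hAU.clm_comp (1 - σ)

theorem exists_projection_onto_graph_sup_commensurate {π P T σ : X →L[ℝ] X}
    (hπ : IsIdempotentElem π) {W F : Submodule ℝ X} (hWπ : W ≤ range (π : X →ₗ[ℝ] X))
    (hWc : IsClosed (W : Set X))
    [FiniteDimensional ℝ (range (π : X →ₗ[ℝ] X) ⧸ W.comap (range (π : X →ₗ[ℝ] X)).subtype)]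
    (hPW : ∀ x, P x ∈ W) (hPfix : ∀ w ∈ W, P w = w) (hPπ : P * π = P)
    (hπTP : π * T * P = 0) (hTP : IsCompactOperator (T * P)) [FiniteDimensional ℝ F]
    (hσF : ∀ x, σ x ∈ F) (hσfix : ∀ f ∈ F, σ f = f) (hπσ : π * σ = 0) :
    ∃ ρ : X →L[ℝ] X, IsIdempotentElem ρ ∧
      range (ρ : X →ₗ[ℝ] X) = W.map ((ContinuousLinearMap.id ℝ X + T : X →L[ℝ] X) : X →ₗ[ℝ] X) ⊔ F ∧
      Commensurate ρ (range (π : X →ₗ[ℝ] X)) := by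
  have hπP : π * P = P := ContinuousLinearMap.ext fun x => by
    obtain ⟨y, hy⟩ := hWπ (hPW x)
    rw [mul_apply_eq_comp, ← hy]
    exact congr($hπ y)
  have hP : IsIdempotentElem P := ContinuousLinearMap.ext fun x => hPfix _ (hPW x)
  have hσ : IsIdempotentElem σ := ContinuousLinearMap.ext fun x => hσfix _ (hσF x)
  have hPTP : P * T * P = 0 := by
    calc P * T * P = P * (π * T * P) := by rw [← mul_assoc, ← mul_assoc, hPπ]
      _ = 0 := by rw [hπTP, mul_zero]
  set A := (1 + T) * P with hAdef
  have hA : IsIdempotentElem A := isIdempotentElem_one_add_mul hP hPTP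
  have hAσ : A * σ = 0 := by rw [mul_assoc, ← hPπ, mul_assoc, hπσ, mul_zero, mul_zero]
  have hAπ : A * (1 - π) = 0 := by rw [mul_assoc, mul_sub, mul_one, hPπ, sub_self, mul_zero]
  have hrangeA : range (A : X →ₗ[ℝ] X) =
      W.map ((ContinuousLinearMap.id ℝ X + T : X →L[ℝ] X) : X →ₗ[ℝ] X) := by
    have hrangeP : range (P : X →ₗ[ℝ] X) = W :=
      le_antisymm (by rintro _ ⟨x, rfl⟩; exact hPW x) fun w hw => ⟨w, hPfix w hw⟩
    rw [hAdef, ContinuousLinearMap.mul_def, ContinuousLinearMap.toLinearMap_comp,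
      LinearMap.range_comp, hrangeP]
    rfl
  have hrangeσ : range (σ : X →ₗ[ℝ] X) = F :=
    le_antisymm (by rintro _ ⟨x, rfl⟩; exact hσF x) fun f hf => ⟨f, hσfix f hf⟩
  have hrangeρ := ContinuousLinearMap.range_add_mul_one_sub hA hσ hAσ
  rw [hrangeA, hrangeσ] at hrangeρ
  refine ⟨A + σ * (1 - A), isIdempotentElem_add_mul_one_sub hA hσ hAσ, hrangeρ,
    commensurate_range_of_mul_eq hWπ hWc hPW hPfix hTP hσF (hrangeρ ▸ le_sup_right) ?_ ?_ ?_⟩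
  · calc π * (A + σ * (1 - A)) = π * P + π * T * P + π * σ * (1 - A) := by
          rw [hAdef]; noncomm_ring
      _ = P := by rw [hπP, hπTP, hπσ, zero_mul, add_zero, add_zero]
  · calc A + σ * (1 - A)
        = (A + σ * (1 - A)) * π + (A * (1 - π) + σ * ((1 - π) - A * (1 - π))) := by noncomm_ring
      _ = (A + σ * (1 - A)) * π + σ * (1 - π) := by rw [hAπ, sub_zero, zero_add]
  · rw [hAdef]
    noncomm_ring

end Commensurability

theorem commensurate_iff_graph_map_compact_general
    {X : Type*} [NormedAddCommGroup X] [NormedSpace ℝ X]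
    (U V : Submodule ℝ X)
    (π : X →L[ℝ] X) (hidem : IsIdempotentElem π)
    (hrange : LinearMap.range (π : X →ₗ[ℝ] X) = U) (hker : LinearMap.ker (π : X →ₗ[ℝ] X) = V)
    (U' : Submodule ℝ X)
    (hFred : IsFredholmRestriction π U')
    -- the graph decomposition `U' = {x + Tx : x ∈ π(U')} ⊕ F`, `F = U' ⊓ ker π`
    (T : X →L[ℝ] X) (hTV : ∀ x ∈ U'.map (π : X →ₗ[ℝ] X), T x ∈ V)
    (hsum : ((U'.map (π : X →ₗ[ℝ] X)).map ((ContinuousLinearMap.id ℝ X + T : X →L[ℝ] X) : X →ₗ[ℝ] X)) ⊔ (U' ⊓ LinearMap.ker (π : X →ₗ[ℝ] X)) = U') :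
    -- `U'` is commensurate with `U` iff `T : π(U') → V` is compact
    (Commensurate π U' ↔ IsCompactOperator (T.comp (U'.map (π : X →ₗ[ℝ] X)).subtypeL)) ∧
    -- and in that case `U` is commensurate with `U'` (symmetry of commensurability)
    (IsCompactOperator (T.comp (U'.map (π : X →ₗ[ℝ] X)).subtypeL) →
      ∃ ρ : X →L[ℝ] X, IsIdempotentElem ρ ∧ LinearMap.range (ρ : X →ₗ[ℝ] X) = U' ∧ Commensurate ρ U) := by
  subst hrange hker
  obtain ⟨hF, hWc, hWcodim⟩ := hFred
  have hWπ : U'.map (π : X →ₗ[ℝ] X) ≤ range (π : X →ₗ[ℝ] X) := LinearMap.map_le_range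
  obtain ⟨P, hPW, hPfix, hPπ⟩ := exists_projection_onto_of_le_range hidem hWπ hWc
  obtain ⟨σ, hσ⟩ := Submodule.ClosedComplemented.of_finiteDimensional (U' ⊓ ker (π : X →ₗ[ℝ] X))
  have hπTP : π * T * P = 0 := ContinuousLinearMap.ext fun x => hTV _ (hPW x)
  have hπG : ∀ w ∈ U'.map (π : X →ₗ[ℝ] X), π (w + T w) = w := fun w hw => by
    obtain ⟨y, rfl⟩ := hWπ hw
    rw [map_add, show π (T _) = 0 from hTV _ hw, add_zero]
    exact congr($hidem y)
  have hG : ∀ w ∈ U'.map (π : X →ₗ[ℝ] X), w + T w ∈ U' := fun w hw =>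
    hsum ▸ Submodule.mem_sup_left ⟨w, hw, rfl⟩
  refine ⟨⟨fun h => isCompactOperator_comp_subtype_of_graph_le h.2 hG hπG, fun hT =>
    ⟨⟨hF, hWc, hWcodim⟩, (isCompactOperator_mul_of_forall_mem hT hPW).comp_subtype_of_sub_mem
      (F := U' ⊓ ker (π : X →ₗ[ℝ] X)) fun u hu => ?_⟩⟩, fun hT => ?_⟩
  · have hπu : π u ∈ U'.map (π : X →ₗ[ℝ] X) := ⟨u, hu, rfl⟩
    have hPu : P u = π u := by rw [← hPfix _ hπu, ← mul_apply_eq_comp, hPπ]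
    rw [sub_apply, mul_apply_eq_comp, hPu, sub_sub]
    refine ⟨sub_mem hu (hG _ hπu), ?_⟩
    change π (u - (π u + T (π u))) = 0
    rw [map_sub, hπG _ hπu, sub_self]
  · obtain ⟨ρ, hρ, hρrange, hρU⟩ := exists_projection_onto_graph_sup_commensurate hidem hWπ hWc
      hPW hPfix hPπ hπTP (isCompactOperator_mul_of_forall_mem hT hPW)
      (σ := (U' ⊓ ker (π : X →ₗ[ℝ] X)).subtypeL ∘L σ) (fun x => (σ x).2)
      (fun f hf => congr_arg Subtype.val (hσ ⟨f, hf⟩)) (ContinuousLinearMap.ext fun x => (σ x).2.2)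
    exact ⟨ρ, hρ, hρrange.trans hsum, hρU⟩

theorem commensurate_iff_graph_map_compact
    {X : Type*} [NormedAddCommGroup X] [NormedSpace ℝ X] [CompleteSpace X]
    (U V : Submodule ℝ X) (hUc : IsClosed (U : Set X)) (hVc : IsClosed (V : Set X))
    (π : X →L[ℝ] X) (hidem : IsIdempotentElem π)
    (hrange : LinearMap.range (π : X →ₗ[ℝ] X) = U) (hker : LinearMap.ker (π : X →ₗ[ℝ] X) = V)
    (U' : Submodule ℝ X) (hU'c : IsClosed (U' : Set X))
    (hFred : IsFredholmRestriction π U')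
    -- the graph decomposition `U' = {x + Tx : x ∈ π(U')} ⊕ F`, `F = U' ⊓ ker π`
    (T : X →L[ℝ] X) (hTV : ∀ x ∈ U'.map (π : X →ₗ[ℝ] X), T x ∈ V)
    (hdisj : Disjoint ((U'.map (π : X →ₗ[ℝ] X)).map ((ContinuousLinearMap.id ℝ X + T : X →L[ℝ] X) : X →ₗ[ℝ] X))
      (U' ⊓ LinearMap.ker (π : X →ₗ[ℝ] X)))
    (hsum : ((U'.map (π : X →ₗ[ℝ] X)).map ((ContinuousLinearMap.id ℝ X + T : X →L[ℝ] X) : X →ₗ[ℝ] X)) ⊔ (U' ⊓ LinearMap.ker (π : X →ₗ[ℝ] X)) = U') :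
    -- `U'` is commensurate with `U` iff `T : π(U') → V` is compact
    (Commensurate π U' ↔ IsCompactOperator (T.comp (U'.map (π : X →ₗ[ℝ] X)).subtypeL)) ∧
    -- and in that case `U` is commensurate with `U'` (symmetry of commensurability)
    (IsCompactOperator (T.comp (U'.map (π : X →ₗ[ℝ] X)).subtypeL) →
      ∃ ρ : X →L[ℝ] X, IsIdempotentElem ρ ∧ LinearMap.range (ρ : X →ₗ[ℝ] X) = U' ∧ Commensurate ρ U) :=
  commensurate_iff_graph_map_compact_general U V π hidem hrange hker U' hFred T hTV hsum
end

section
/- Let X be a Banach space with subspaces U₀, U₁, V₀, V₁ satisfying the topological decompositions X = U₀ ⊕ U₁ = V₀ ⊕ V₁ = V₀ ⊕ U₁ = U₀ ⊕ V₁. Write π_{A,B} for the projection onto A along B, and let T_{V_i} : U_i → U_{i+1 mod 2} be the bounded operator whose graph is V_i. Then: (1) π_{V₀,U₁} = (1 + T_{V₀}) π_{U₀,U₁}; (2) π_{U₁,V₀} = 1 − π_{V₀,U₁}; and (3) π_{V₀,V₁} = (1 + T_{V₀}) π_{U₀,U₁} (1 + T_{V₁} π_{U₁,V₀})^{−1}.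 -/
/-!
Every formula comes from one observation: for an idempotent `e`, `e * a = f` as soon as
`range f ⊆ range e` and `range (a - f) ⊆ ker e`. This gives (1) with `e = r`, `a = 1`, and (2)
with `e = u`, `a = 1`. It also gives `q (1 + T₁ u) = r`, since `(1 + T₁ u) - r = (1 + T₁) u`
takes values in the graph `V₁ = ker q`. Once `1 + T₁ u` is shown invertible, (3) is
`q = r (1 + T₁ u)⁻¹`.
-/

namespace ContinuousLinearMap

section Semiring

variable {R M : Type*} [Semiring R] [TopologicalSpace M] [AddCommMonoid M] [Module R M]

theorem range_le_ker_iff_mul_eq_zero {f g : M →L[R] M} : g.range ≤ f.ker ↔ f * g = 0 := by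
  rw [LinearMap.range_le_ker_iff, ← Module.End.mul_eq_comp, ← toLinearMap_mul]
  exact coe_injective.eq_iff' rfl

theorem range_mul_le_of_mapsTo {T w : M →L[R] M} {U W : Submodule R M} (hw : w.range ≤ U)
    (hT : ∀ x ∈ U, T x ∈ W) : (T * w).range ≤ W := by
  rintro _ ⟨x, rfl⟩
  exact hT _ (hw ⟨x, rfl⟩)

theorem range_one_add_mul_le_map [ContinuousAdd M] {T w : M →L[R] M} {U : Submodule R M}
    (hw : w.range ≤ U) :
    ((1 + T) * w).range ≤
      U.map ((ContinuousLinearMap.id R M + T : M →L[R] M) : M →ₗ[R] M) := by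
  rintro _ ⟨x, rfl⟩
  exact ⟨w x, hw ⟨x, rfl⟩, rfl⟩

theorem IsIdempotentElem.mul_eq_right_of_range_le {e f : M →L[R] M} (he : IsIdempotentElem e)
    (h : f.range ≤ e.range) : e * f = f :=
  coe_injective <|
    (LinearMap.IsIdempotentElem.comp_eq_right_iff (IsIdempotentElem.toLinearMap he) _).2 h

end Semiring

namespace IsIdempotentElem

variable {R M : Type*} [Ring R] [TopologicalSpace M] [AddCommGroup M] [Module R M]
  [IsTopologicalAddGroup M]

theorem range_one_sub {e : M →L[R] M} (he : IsIdempotentElem e) : (1 - e).range = e.ker := by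
  rw [toLinearMap_sub, toLinearMap_one,
    LinearMap.IsIdempotentElem.ker_eq_range_one_sub (IsIdempotentElem.toLinearMap he)]

theorem mul_eq_of_range_le {e a f : M →L[R] M} (he : IsIdempotentElem e)
    (hf : f.range ≤ e.range) (haf : (a - f).range ≤ e.ker) : e * a = f :=
  calc e * a = e * f + e * (a - f) := by rw [mul_sub, add_sub_cancel]
    _ = f := by rw [mul_eq_right_of_range_le he hf, range_le_ker_iff_mul_eq_zero.1 haf, add_zero]

/-- On the graph of `T : ker e → range e`, the map `1 - e` recovers the `ker e`-coordinate. -/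
theorem one_add_mul_one_sub_apply_of_mem_map {e T : M →L[R] M} (he : IsIdempotentElem e)
    (hT : ∀ x ∈ e.ker, T x ∈ e.range) {v : M}
    (hv : v ∈ e.ker.map ((ContinuousLinearMap.id R M + T : M →L[R] M) : M →ₗ[R] M)) :
    ((1 + T) * (1 - e)) v = v := by
  obtain ⟨b, hb, rfl⟩ := hv
  have hTb : e (T b) = T b :=
    (LinearMap.IsIdempotentElem.mem_range_iff (IsIdempotentElem.toLinearMap he)).1 (hT b hb)
  have heb : e b = 0 := hb
  simp [hTb, heb]

variable {p q r u T : M →L[R] M}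

theorem eq_one_add_mul_of_graph (hp : IsIdempotentElem p) (hr : IsIdempotentElem r)
    (hT : ∀ x ∈ p.range, T x ∈ p.ker)
    (hrr : p.range.map ((ContinuousLinearMap.id R M + T : M →L[R] M) : M →ₗ[R] M) ≤ r.range)
    (hrk : p.ker ≤ r.ker) :
    r = (1 + T) * p := by
  have hpTp : p * (T * p) = 0 := range_le_ker_iff_mul_eq_zero.1 (range_mul_le_of_mapsTo le_rfl hT)
  refine (mul_one r).symm.trans <|
    mul_eq_of_range_le hr ((range_one_add_mul_le_map le_rfl).trans hrr) (le_trans ?_ hrk)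
  rw [range_le_ker_iff_mul_eq_zero]
  calc p * (1 - (1 + T) * p) = p - p * p - p * (T * p) := by noncomm_ring
    _ = 0 := by rw [hp, hpTp, sub_self, sub_zero]

theorem eq_one_sub_of_range_le_ker (hu : IsIdempotentElem u) (hr : IsIdempotentElem r)
    (hur : r.ker ≤ u.range) (huk : r.range ≤ u.ker) : u = 1 - r := by
  refine (mul_one u).symm.trans (mul_eq_of_range_le hu ?_ ?_)
  · rwa [range_one_sub hr]
  · rwa [sub_sub_cancel]

theorem mul_one_add_mul_one_sub_eq (hq : IsIdempotentElem q) (hr : IsIdempotentElem r)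
    (hrq : r.range ≤ q.range)
    (hqk : r.ker.map ((ContinuousLinearMap.id R M + T : M →L[R] M) : M →ₗ[R] M) ≤ q.ker) :
    q * (1 + T * (1 - r)) = r := by
  refine mul_eq_of_range_le hq hrq ?_
  rw [show 1 + T * (1 - r) - r = (1 + T) * (1 - r) by noncomm_ring]
  exact (range_one_add_mul_le_map (range_one_sub hr).le).trans hqk

/-- `1 + T u` is the identity on `ker u` and maps `range u` onto the graph of `T` by `1 + T`;
its inverse is the identity on `range q` and `1 - p` on `ker q`. -/
theorem mul_one_add_mul_eq_one (hp : IsIdempotentElem p) (hT : ∀ x ∈ p.ker, T x ∈ p.range)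
    (hup : u.range ≤ p.ker) (hqS : q * (1 + T * u) = 1 - u) :
    (q + (1 - p) * (1 - q)) * (1 + T * u) = 1 := by
  have hpu : p * u = 0 := range_le_ker_iff_mul_eq_zero.1 hup
  have hpTu : p * (T * u) = T * u := mul_eq_right_of_range_le hp (range_mul_le_of_mapsTo hup hT)
  calc (q + (1 - p) * (1 - q)) * (1 + T * u)
      = q * (1 + T * u) + (1 - p) * (1 + T * u - q * (1 + T * u)) := by noncomm_ring
    _ = 1 - u + (u + T * u - p * u - p * (T * u)) := by rw [hqS]; noncomm_ring
    _ = 1 := by rw [hpu, hpTu]; abel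

theorem one_add_mul_mul_eq_one (hp : IsIdempotentElem p) (hq : IsIdempotentElem q)
    (hu : IsIdempotentElem u) (hT : ∀ x ∈ p.ker, T x ∈ p.range) (hpu : p.ker ≤ u.range)
    (hqu : q.range ≤ u.ker)
    (hqk : q.ker ≤ p.ker.map ((ContinuousLinearMap.id R M + T : M →L[R] M) : M →ₗ[R] M)) :
    (1 + T * u) * (q + (1 - p) * (1 - q)) = 1 := by
  have huq : u * q = 0 := range_le_ker_iff_mul_eq_zero.1 hqu
  have hup : u * (1 - p) = 1 - p := mul_eq_right_of_range_le hu (by rwa [range_one_sub hp])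
  have hgraph : (1 + T) * (1 - p) * (1 - q) = 1 - q := by
    ext y
    exact one_add_mul_one_sub_apply_of_mem_map hp hT (hqk (range_one_sub hq ▸ ⟨y, rfl⟩))
  calc (1 + T * u) * (q + (1 - p) * (1 - q))
      = q + (1 - p) * (1 - q) + T * (u * q) + T * (u * (1 - p)) * (1 - q) := by noncomm_ring
    _ = q + (1 + T) * (1 - p) * (1 - q) := by rw [huq, hup]; noncomm_ring
    _ = 1 := by rw [hgraph]; abel

end IsIdempotentElem

end ContinuousLinearMap

open ContinuousLinearMap

theorem projection_formulas_general
    {X : Type*} [NormedAddCommGroup X] [NormedSpace ℝ X]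
    (U₀ U₁ V₀ V₁ : Submodule ℝ X)
    -- π_{U₀,U₁}
    (p : X →L[ℝ] X) (hp : IsIdempotentElem p)
    (hpr : LinearMap.range (p : X →ₗ[ℝ] X) = U₀) (hpk : LinearMap.ker (p : X →ₗ[ℝ] X) = U₁)
    -- π_{V₀,V₁}
    (q : X →L[ℝ] X) (hq : IsIdempotentElem q)
    (hqr : LinearMap.range (q : X →ₗ[ℝ] X) = V₀) (hqk : LinearMap.ker (q : X →ₗ[ℝ] X) = V₁)
    -- π_{V₀,U₁}
    (r : X →L[ℝ] X) (hr : IsIdempotentElem r)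
    (hrr : LinearMap.range (r : X →ₗ[ℝ] X) = V₀) (hrk : LinearMap.ker (r : X →ₗ[ℝ] X) = U₁)
    -- π_{U₁,V₀}
    (u : X →L[ℝ] X) (hu : IsIdempotentElem u)
    (hur : LinearMap.range (u : X →ₗ[ℝ] X) = U₁) (huk : LinearMap.ker (u : X →ₗ[ℝ] X) = V₀)
    -- the graph maps `T_{V₀} : U₀ → U₁` and `T_{V₁} : U₁ → U₀`
    (T₀ : X →L[ℝ] X) (hT₀ : ∀ x ∈ U₀, T₀ x ∈ U₁)
    (hV₀ : U₀.map ((ContinuousLinearMap.id ℝ X + T₀ : X →L[ℝ] X) : X →ₗ[ℝ] X) = V₀)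
    (T₁ : X →L[ℝ] X) (hT₁ : ∀ x ∈ U₁, T₁ x ∈ U₀)
    (hV₁ : U₁.map ((ContinuousLinearMap.id ℝ X + T₁ : X →L[ℝ] X) : X →ₗ[ℝ] X) = V₁) :
    -- (1)
    r = (1 + T₀) * p ∧
    -- (2)
    u = 1 - r ∧
    -- (3): `1 + T₁ π_{U₁,V₀}` is invertible and
    --      `π_{V₀,V₁} = (1 + T₀) π_{U₀,U₁} (1 + T₁ π_{U₁,V₀})⁻¹`
    ∃ g : X →L[ℝ] X, g * (1 + T₁ * u) = 1 ∧ (1 + T₁ * u) * g = 1 ∧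
      q = (1 + T₀) * p * g := by
  subst hpr hpk hqr hqk
  have h1 : r = (1 + T₀) * p :=
    IsIdempotentElem.eq_one_add_mul_of_graph hp hr hT₀ (hV₀.trans hrr.symm).le hrk.ge
  have h2 : u = 1 - r :=
    IsIdempotentElem.eq_one_sub_of_range_le_ker hu hr (hrk.trans hur.symm).le
      (hrr.trans huk.symm).le
  have hqS : q * (1 + T₁ * u) = r :=
    h2 ▸ IsIdempotentElem.mul_one_add_mul_one_sub_eq hq hr hrr.le (hrk ▸ hV₁.le)
  have hgS :=
    IsIdempotentElem.mul_one_add_mul_eq_one hp hT₁ hur.le (by rw [hqS, h2, sub_sub_cancel])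
  have hSg := IsIdempotentElem.one_add_mul_mul_eq_one hp hq hu hT₁ hur.ge huk.ge hV₁.ge
  refine ⟨h1, h2, _, hgS, hSg, ?_⟩
  calc q = q * (1 + T₁ * u) * (q + (1 - p) * (1 - q)) := by rw [mul_assoc, hSg, mul_one]
    _ = (1 + T₀) * p * (q + (1 - p) * (1 - q)) := by rw [hqS, h1]

theorem projection_formulas
    {X : Type*} [NormedAddCommGroup X] [NormedSpace ℝ X] [CompleteSpace X]
    (U₀ U₁ V₀ V₁ : Submodule ℝ X)
    -- π_{U₀,U₁}
    (p : X →L[ℝ] X) (hp : IsIdempotentElem p)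
    (hpr : LinearMap.range (p : X →ₗ[ℝ] X) = U₀) (hpk : LinearMap.ker (p : X →ₗ[ℝ] X) = U₁)
    -- π_{V₀,V₁}
    (q : X →L[ℝ] X) (hq : IsIdempotentElem q)
    (hqr : LinearMap.range (q : X →ₗ[ℝ] X) = V₀) (hqk : LinearMap.ker (q : X →ₗ[ℝ] X) = V₁)
    -- π_{V₀,U₁}
    (r : X →L[ℝ] X) (hr : IsIdempotentElem r)
    (hrr : LinearMap.range (r : X →ₗ[ℝ] X) = V₀) (hrk : LinearMap.ker (r : X →ₗ[ℝ] X) = U₁)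
    -- π_{U₁,V₀}
    (u : X →L[ℝ] X) (hu : IsIdempotentElem u)
    (hur : LinearMap.range (u : X →ₗ[ℝ] X) = U₁) (huk : LinearMap.ker (u : X →ₗ[ℝ] X) = V₀)
    -- the graph maps `T_{V₀} : U₀ → U₁` and `T_{V₁} : U₁ → U₀`
    (T₀ : X →L[ℝ] X) (hT₀ : ∀ x ∈ U₀, T₀ x ∈ U₁)
    (hV₀ : U₀.map ((ContinuousLinearMap.id ℝ X + T₀ : X →L[ℝ] X) : X →ₗ[ℝ] X) = V₀)
    (T₁ : X →L[ℝ] X) (hT₁ : ∀ x ∈ U₁, T₁ x ∈ U₀)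
    (hV₁ : U₁.map ((ContinuousLinearMap.id ℝ X + T₁ : X →L[ℝ] X) : X →ₗ[ℝ] X) = V₁) :
    -- (1)
    r = (1 + T₀) * p ∧
    -- (2)
    u = 1 - r ∧
    -- (3): `1 + T₁ π_{U₁,V₀}` is invertible and
    --      `π_{V₀,V₁} = (1 + T₀) π_{U₀,U₁} (1 + T₁ π_{U₁,V₀})⁻¹`
    ∃ g : X →L[ℝ] X, g * (1 + T₁ * u) = 1 ∧ (1 + T₁ * u) * g = 1 ∧
      q = (1 + T₀) * p * g :=
  projection_formulas_general U₀ U₁ V₀ V₁ p hp hpr hpk q hq hqr hqk r hr hrr hrk u hu hur huk T₀ hT₀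
    hV₀ T₁ hT₁ hV₁
end

section
/- Let X be a Banach space with topological decompositions X = U₀ ⊕ U₁ = V₀ ⊕ V₁. If V₀ is commensurate with U₀ and V₁ is commensurate with U₁, then the projection π_{V₀,V₁} onto V₀ along V₁ is commensurate with the projection π_{U₀,U₁} onto U₀ along U₁, i.e., their difference is a compact operator. -/
theorem IsCompactOperator.comp_of_forall_mem {R E M N : Type*} [Semiring R]
    [TopologicalSpace E] [AddCommMonoid E] [Module R E]
    [TopologicalSpace M] [AddCommMonoid M] [Module R M]
    [TopologicalSpace N] [AddCommMonoid N] [Module R N] {S : Submodule R M} {f : M →L[R] N}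
    (hf : IsCompactOperator (f.comp S.subtypeL)) {g : E →L[R] M} (hg : ∀ x, g x ∈ S) :
    IsCompactOperator (f.comp g) :=
  hf.comp_clm (g.codRestrict S hg)

theorem commensurate_projections_of_commensurate_subspaces_general
    {X : Type*} [NormedAddCommGroup X] [NormedSpace ℝ X]
    (V₀ V₁ : Submodule ℝ X)
    (p : X →L[ℝ] X)
    -- `X = V₀ ⊕ V₁` via the projection `q = π_{V₀,V₁}`
    (q : X →L[ℝ] X) (hq : IsIdempotentElem q)
    (hqr : LinearMap.range (q : X →ₗ[ℝ] X) = V₀) (hqk : LinearMap.ker (q : X →ₗ[ℝ] X) = V₁)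
    -- `V₀` commensurate with `U₀`, `V₁` commensurate with `U₁`
    (h₀ : Commensurate p V₀)
    (h₁ : Commensurate (ContinuousLinearMap.id ℝ X - p) V₁) :
    IsCompactOperator (q - p) := by
  have hq₀ (x : X) : q x ∈ V₀ := hqr ▸ LinearMap.mem_range_self (q : X →ₗ[ℝ] X) x
  have hq₁ (x : X) : (1 - q) x ∈ V₁ := by
    rw [← hqk, LinearMap.IsIdempotentElem.ker_eq_range_one_sub
      (ContinuousLinearMap.IsIdempotentElem.toLinearMap hq)]
    exact LinearMap.mem_range_self _ x
  have hsplit : q - p = (1 - p) * q - (1 - (1 - p)) * (1 - q) := by noncomm_ring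
  rw [hsplit]
  exact (h₀.2.comp_of_forall_mem hq₀).sub (h₁.2.comp_of_forall_mem hq₁)

theorem commensurate_projections_of_commensurate_subspaces
    {X : Type*} [NormedAddCommGroup X] [NormedSpace ℝ X] [CompleteSpace X]
    (U₀ U₁ V₀ V₁ : Submodule ℝ X)
    -- `X = U₀ ⊕ U₁` via the projection `p = π_{U₀,U₁}`
    (p : X →L[ℝ] X) (hp : IsIdempotentElem p)
    (hpr : LinearMap.range (p : X →ₗ[ℝ] X) = U₀) (hpk : LinearMap.ker (p : X →ₗ[ℝ] X) = U₁)
    -- `X = V₀ ⊕ V₁` via the projection `q = π_{V₀,V₁}`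
    (q : X →L[ℝ] X) (hq : IsIdempotentElem q)
    (hqr : LinearMap.range (q : X →ₗ[ℝ] X) = V₀) (hqk : LinearMap.ker (q : X →ₗ[ℝ] X) = V₁)
    -- `V₀` commensurate with `U₀`, `V₁` commensurate with `U₁`
    (h₀ : Commensurate p V₀)
    (h₁ : Commensurate (ContinuousLinearMap.id ℝ X - p) V₁) :
    IsCompactOperator (q - p) :=
  commensurate_projections_of_commensurate_subspaces_general V₀ V₁ p q hq hqr hqk h₀ h₁
end

section
/- Let V(t), t ∈ ℝ, be a continuous (respectively smooth) family of complemented subspaces of a Banach space X. Then for every t₀ ∈ ℝ there exist an open interval I containing t₀ and a continuous (respectively smooth) family of isomorphisms Φ(t) : X → X for t ∈ I, with Φ(t₀) = id, such that Φ(t)(V(t₀)) = V(t) for all t ∈ I. -/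
/-!
Fix a continuous projection `ρ` onto `V t₀` and the operators `T t` given near `t₀`. The operator
`S t = 1 + T t ∘ ρ` agrees with `1 + T t` on `V t₀`, so it maps `V t₀` onto `V t`; and `S t₀` is
bijective, being the identity modulo `V t₀` and an automorphism of `V t₀`. Hence
`Φ t = S t ∘ (S t₀)⁻¹` is `C^n`, is the identity at `t₀`, maps `V t₀` onto `V t`, and stays
invertible near `t₀` because the units of the Banach algebra `X →L[ℝ] X` form an open set.
-/

/-- A `C^n`-regular family of complemented subspaces of `X`: each `V t` is a closed
complemented subspace, and locally near each `t₀` there are operators `T t` depending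
`C^n` on `t` (in operator norm) such that `x ↦ x + T t x` maps `V t₀` isomorphically
onto `V t`. -/
def IsRegularFamilyOfSubspaces {X : Type*} [NormedAddCommGroup X] [NormedSpace ℝ X]
    (n : ℕ∞) (V : ℝ → Submodule ℝ X) : Prop :=
  (∀ t : ℝ, ∃ ρ : X →L[ℝ] X, IsIdempotentElem ρ ∧ LinearMap.range (ρ : X →ₗ[ℝ] X) = V t) ∧
  ∀ t₀ : ℝ, ∃ ε > (0 : ℝ), ∃ T : ℝ → X →L[ℝ] X,
    ContDiffOn ℝ n T (Metric.ball t₀ ε) ∧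
    ∀ t ∈ Metric.ball t₀ ε,
      (V t₀).map ((ContinuousLinearMap.id ℝ X + T t : X →L[ℝ] X) : X →ₗ[ℝ] X) = V t ∧
      Set.InjOn (ContinuousLinearMap.id ℝ X + T t) (V t₀)

namespace LinearMap.IsProj

variable {R M : Type*} [Ring R] [AddCommGroup M] [Module R M] {W : Submodule R M}
  {ρ : Module.End R M}

theorem map_one_add_mul (hρ : IsProj W ρ) (T : Module.End R M) :
    W.map (1 + T * ρ) = W.map (1 + T) :=
  SetLike.coe_injective <| by
    simp only [Submodule.map_coe]
    exact Set.image_congr fun v hv => by simp [hρ.map_id v hv]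

theorem bijective_one_add_mul (hρ : IsProj W ρ) {T : Module.End R M}
    (hmap : W.map (1 + T) = W) (hinj : Set.InjOn ⇑(1 + T) W) :
    Function.Bijective ⇑(1 + T * ρ) := by
  have hTW : ∀ v ∈ W, T v ∈ W := fun v hv => by
    have h : (1 + T) v ∈ W := hmap ▸ Submodule.mem_map_of_mem hv
    simpa using W.sub_mem h hv
  constructor
  · refine (injective_iff_map_eq_zero _).2 fun x hx => ?_
    have hx' : x = -T (ρ x) := eq_neg_of_add_eq_zero_left (by simpa using hx)
    have hxW : x ∈ W := hx' ▸ W.neg_mem (hTW _ (hρ.map_mem x))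
    refine hinj hxW W.zero_mem ?_
    simpa [hρ.map_id x hxW] using hx
  · intro y
    obtain ⟨v, hv, hvy⟩ : ρ y ∈ W.map (1 + T) := hmap.symm ▸ hρ.map_mem y
    have hρv : ρ (v + (y - ρ y)) = v := by
      simp [hρ.map_id v hv, hρ.map_id _ (hρ.map_mem y)]
    refine ⟨v + (y - ρ y), ?_⟩
    simp only [add_apply, Module.End.one_apply, Module.End.mul_apply, hρv] at hvy ⊢
    rw [← sub_eq_zero, ← hvy]
    abel

end LinearMap.IsProj

theorem ContinuousAt.eventually_isUnit {α R : Type*} [TopologicalSpace α] [NormedRing R]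
    [HasSummableGeomSeries R] {f : α → R} {a : α} (hf : ContinuousAt f a) (ha : IsUnit (f a)) :
    ∀ᶠ x in nhds a, IsUnit (f x) :=
  hf.eventually (Units.isOpen.mem_nhds ha)

theorem local_trivialization_of_family_of_subspaces
    {X : Type*} [NormedAddCommGroup X] [NormedSpace ℝ X] [CompleteSpace X]
    (n : ℕ∞) (V : ℝ → Submodule ℝ X)
    (hV : IsRegularFamilyOfSubspaces n V) (t₀ : ℝ) :
    ∃ ε > (0 : ℝ), ∃ Φ : ℝ → X →L[ℝ] X,
      ContDiffOn ℝ n Φ (Metric.ball t₀ ε) ∧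
      Φ t₀ = ContinuousLinearMap.id ℝ X ∧
      ∀ t ∈ Metric.ball t₀ ε,
        (∃ Ψ : X →L[ℝ] X, Φ t * Ψ = 1 ∧ Ψ * Φ t = 1) ∧
        (V t₀).map (Φ t : X →ₗ[ℝ] X) = V t := by
  obtain ⟨hproj, hlocal⟩ := hV
  obtain ⟨ρ, hρ, hρV⟩ := hproj t₀
  obtain ⟨ε, hε, T, hT, hTV⟩ := hlocal t₀
  have ht₀ : t₀ ∈ Metric.ball t₀ ε := Metric.mem_ball_self hε
  have hρW : LinearMap.IsProj (V t₀) (ρ : X →ₗ[ℝ] X) := hρV ▸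
    LinearMap.IsIdempotentElem.isProj_range _ (ContinuousLinearMap.IsIdempotentElem.toLinearMap hρ)
  let S : ℝ → X →L[ℝ] X := fun t => 1 + T t * ρ
  have hSV : ∀ t ∈ Metric.ball t₀ ε, (V t₀).map (S t : X →ₗ[ℝ] X) = V t := fun t ht =>
    (hρW.map_one_add_mul _).trans (hTV t ht).1
  obtain ⟨hinj, hsurj⟩ := hρW.bijective_one_add_mul (hTV t₀ ht₀).1 (hTV t₀ ht₀).2
  let e := ContinuousLinearEquiv.ofBijective (S t₀) (LinearMap.ker_eq_bot.2 hinj)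
    (LinearMap.range_eq_top.2 hsurj)
  let Φ : ℝ → X →L[ℝ] X := fun t => S t * e.symm
  have hΦ : ContDiffOn ℝ n Φ (Metric.ball t₀ ε) :=
    (contDiffOn_const.add (hT.mul contDiffOn_const)).mul contDiffOn_const
  have hΦ₀ : Φ t₀ = 1 := e.coe_comp_coe_symm
  obtain ⟨δ, hδ, hunit⟩ := Metric.eventually_nhds_iff_ball.1 <|
    (hΦ.continuousOn.continuousAt (Metric.isOpen_ball.mem_nhds ht₀)).eventually_isUnit
      (hΦ₀ ▸ isUnit_one)
  refine ⟨min ε δ, lt_min hε hδ, Φ, hΦ.mono (Metric.ball_subset_ball (min_le_left _ _)), hΦ₀,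
    fun t ht => ⟨isUnit_iff_exists.1 (hunit t (Metric.ball_subset_ball (min_le_right _ _) ht)),
      ?_⟩⟩
  have he : (V t₀).map (e.symm : X →ₗ[ℝ] X) = V t₀ :=
    (Submodule.map_symm_eq_iff e.toLinearEquiv).2 (hSV t₀ ht₀)
  calc (V t₀).map (Φ t : X →ₗ[ℝ] X)
      = ((V t₀).map (e.symm : X →ₗ[ℝ] X)).map (S t : X →ₗ[ℝ] X) := Submodule.map_comp _ _ _
    _ = V t := by rw [he, hSV t (Metric.ball_subset_ball (min_le_left _ _) ht)]
end

section
/- Let (X, ω) be a strongly symplectic Hilbert space with compatible complex structure J. Let U ⊆ X be a closed coisotropic subspace and let L ⊆ X be a Lagrangian subspace such that L + Ann(U) is closed. Then U ∩ JU is a strongly symplectic Hilbert space, and the image of L ∩ U under the orthogonal projection onto U ∩ JU is a Lagrangian subspace of U ∩ JU. -/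
/-! With `ω x y = ⟪J x, y⟫`, coisotropy and closedness of `U` split `U` orthogonally as
`Ann U ⊕ (U ∩ JU)`, so on `U` the projection `P` only subtracts an element of `Ann U`, which is
`ω`-orthogonal to all of `U`. Hence `ω (P u) (P v) = ω u v` for `u, v ∈ U`, and the image of the
isotropic space `L ∩ U` is isotropic. Conversely, if `w ∈ U ∩ JU` is `ω`-orthogonal to that image,
it is `ω`-orthogonal to `L ∩ U`, so it lies in `Ann (L ∩ U)`, which is `L + Ann U` because the
latter is closed; writing `w = l + a` gives `l ∈ L ∩ U` with `P l = w`. -/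

open RealInnerProductSpace Submodule

section

variable {X : Type*} [NormedAddCommGroup X] [InnerProductSpace ℝ X]

theorem Submodule.orthogonal_orthogonal_of_isClosed [CompleteSpace X] {V : Submodule ℝ X}
    (hV : IsClosed (V : Set X)) : Vᗮᗮ = V :=
  have := hV.completeSpace_coe
  V.orthogonal_orthogonal

namespace ComplexStructure

variable {J : X →L[ℝ] X}

theorem comap_comap (hJ2 : ∀ x, J (J x) = -x) (S : Submodule ℝ X) :
    (S.comap (J : X →ₗ[ℝ] X)).comap (J : X →ₗ[ℝ] X) = S := by
  ext x
  simp only [mem_comap, ContinuousLinearMap.coe_coe, hJ2 x, S.neg_mem_iff]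

theorem map_eq_comap (hJ2 : ∀ x, J (J x) = -x) (S : Submodule ℝ X) :
    S.map (J : X →ₗ[ℝ] X) = S.comap (J : X →ₗ[ℝ] X) := by
  ext x
  simp only [mem_map, mem_comap, ContinuousLinearMap.coe_coe]
  constructor
  · rintro ⟨s, hs, rfl⟩
    simpa [hJ2] using hs
  · exact fun hx => ⟨-J x, S.neg_mem hx, by rw [map_neg, hJ2, neg_neg]⟩

theorem inner_apply_left (hJ2 : ∀ x, J (J x) = -x) (hJiso : ∀ x y, ⟪J x, J y⟫ = ⟪x, y⟫)
    (x y : X) : ⟪J x, y⟫ = -⟪x, J y⟫ := by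
  rw [← hJiso x (J y), hJ2, inner_neg_right, neg_neg]

theorem orthogonal_comap (hJ2 : ∀ x, J (J x) = -x) (hJiso : ∀ x y, ⟪J x, J y⟫ = ⟪x, y⟫)
    (S : Submodule ℝ X) : (S.comap (J : X →ₗ[ℝ] X))ᗮ = Sᗮ.comap (J : X →ₗ[ℝ] X) := by
  ext x
  simp only [mem_orthogonal, mem_comap, ContinuousLinearMap.coe_coe]
  constructor
  · intro h s hs
    simpa [inner_apply_left hJ2 hJiso] using h (-J s) (by rwa [map_neg, hJ2, neg_neg])
  · intro h u hu
    rw [← hJiso u x]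
    exact h (J u) hu

noncomputable def ann (J : X →L[ℝ] X) (V : Submodule ℝ X) : Submodule ℝ X :=
  Vᗮ.comap (J : X →ₗ[ℝ] X)

theorem mem_ann {V : Submodule ℝ X} {x : X} : x ∈ ann J V ↔ ∀ v ∈ V, ⟪J x, v⟫ = 0 :=
  mem_orthogonal' V (J x)

theorem isClosed_ann (V : Submodule ℝ X) : IsClosed (ann J V : Set X) :=
  V.isClosed_orthogonal.preimage J.continuous

theorem inner_apply_eq_zero_of_mem_ann (hJ2 : ∀ x, J (J x) = -x)
    (hJiso : ∀ x y, ⟪J x, J y⟫ = ⟪x, y⟫) {V : Submodule ℝ X} {u a : X} (hu : u ∈ V)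
    (ha : a ∈ ann J V) : ⟪J u, a⟫ = 0 := by
  rw [inner_apply_left hJ2 hJiso, real_inner_comm, mem_ann.1 ha u hu, neg_zero]

theorem orthogonal_ann (hJ2 : ∀ x, J (J x) = -x) (hJiso : ∀ x y, ⟪J x, J y⟫ = ⟪x, y⟫)
    (V : Submodule ℝ X) : (ann J V)ᗮ = Vᗮᗮ.comap (J : X →ₗ[ℝ] X) :=
  orthogonal_comap hJ2 hJiso Vᗮ

theorem ann_ann (hJ2 : ∀ x, J (J x) = -x) (hJiso : ∀ x y, ⟪J x, J y⟫ = ⟪x, y⟫)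
    (V : Submodule ℝ X) : ann J (ann J V) = Vᗮᗮ := by
  rw [ann, orthogonal_ann hJ2 hJiso, comap_comap hJ2]

theorem ann_sup (V V' : Submodule ℝ X) : ann J (V ⊔ V') = ann J V ⊓ ann J V' := by
  rw [ann, ← inf_orthogonal, comap_inf, ann, ann]

theorem ann_inf_eq_sup_ann [CompleteSpace X] (hJ2 : ∀ x, J (J x) = -x)
    (hJiso : ∀ x y, ⟪J x, J y⟫ = ⟪x, y⟫) {L U : Submodule ℝ X} (hU : IsClosed (U : Set X))
    (hL : L = ann J L) (hclosed : IsClosed ((L ⊔ ann J U : Submodule ℝ X) : Set X)) :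
    ann J (L ⊓ U) = L ⊔ ann J U := by
  have h : ann J (L ⊔ ann J U) = L ⊓ U := by
    rw [ann_sup, ann_ann hJ2 hJiso, ← hL, orthogonal_orthogonal_of_isClosed hU]
  rw [← h, ann_ann hJ2 hJiso, orthogonal_orthogonal_of_isClosed hclosed]

theorem apply_mem_inf_comap (hJ2 : ∀ x, J (J x) = -x) {U : Submodule ℝ X} {x : X}
    (hx : x ∈ U ⊓ U.comap (J : X →ₗ[ℝ] X)) : J x ∈ U ⊓ U.comap (J : X →ₗ[ℝ] X) :=
  ⟨hx.2, by simpa [hJ2] using hx.1⟩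

theorem eq_zero_of_forall_inner_apply_eq_zero (hJ2 : ∀ x, J (J x) = -x) {W : Submodule ℝ X}
    {x : X} (hx : J x ∈ W) (h : ∀ y ∈ W, ⟪J x, y⟫ = 0) : x = 0 := by
  have hJx : J x = 0 := inner_self_eq_zero.1 (h _ hx)
  simpa [hJx] using (hJ2 x).symm

theorem ann_sup_inf_comap [CompleteSpace X] (hJ2 : ∀ x, J (J x) = -x)
    (hJiso : ∀ x y, ⟪J x, J y⟫ = ⟪x, y⟫) {U : Submodule ℝ X} (hU : IsClosed (U : Set X))
    (hcoiso : ann J U ≤ U) : ann J U ⊔ U ⊓ U.comap (J : X →ₗ[ℝ] X) = U := by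
  have := (isClosed_ann (J := J) U).completeSpace_coe
  have h := sup_orthogonal_inf_of_hasOrthogonalProjection hcoiso
  rwa [orthogonal_ann hJ2 hJiso, orthogonal_orthogonal_of_isClosed hU, inf_comm] at h

theorem ann_le_orthogonal_inf_comap (hJiso : ∀ x y, ⟪J x, J y⟫ = ⟪x, y⟫)
    (U : Submodule ℝ X) : ann J U ≤ (U ⊓ U.comap (J : X →ₗ[ℝ] X))ᗮ := by
  intro a ha
  rw [mem_orthogonal]
  intro w hw
  rw [← hJiso]
  exact (mem_orthogonal _ _).1 ha (J w) hw.2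

section Projection

variable {U : Submodule ℝ X} {P : X →L[ℝ] X}

theorem apply_eq_self_of_mem_inf_comap (hP : IsIdempotentElem P)
    (hrange : LinearMap.range (P : X →ₗ[ℝ] X) = U ⊓ U.comap (J : X →ₗ[ℝ] X)) {w : X}
    (hw : w ∈ U ⊓ U.comap (J : X →ₗ[ℝ] X)) : P w = w :=
  have hP' := ContinuousLinearMap.isIdempotentElem_toLinearMap_iff.2 hP
  (LinearMap.IsIdempotentElem.mem_range_iff hP').1 (hrange ▸ hw)

theorem apply_eq_zero_of_mem_ann (hJiso : ∀ x y, ⟪J x, J y⟫ = ⟪x, y⟫)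
    (hker : LinearMap.ker (P : X →ₗ[ℝ] X) = (U ⊓ U.comap (J : X →ₗ[ℝ] X))ᗮ) {a : X}
    (ha : a ∈ ann J U) : P a = 0 :=
  LinearMap.mem_ker.1 (hker ▸ ann_le_orthogonal_inf_comap hJiso U ha)

theorem sub_apply_mem_ann [CompleteSpace X] (hJ2 : ∀ x, J (J x) = -x)
    (hJiso : ∀ x y, ⟪J x, J y⟫ = ⟪x, y⟫) (hU : IsClosed (U : Set X)) (hcoiso : ann J U ≤ U)
    (hP : IsIdempotentElem P)
    (hrange : LinearMap.range (P : X →ₗ[ℝ] X) = U ⊓ U.comap (J : X →ₗ[ℝ] X))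
    (hker : LinearMap.ker (P : X →ₗ[ℝ] X) = (U ⊓ U.comap (J : X →ₗ[ℝ] X))ᗮ) {u : X}
    (hu : u ∈ U) : u - P u ∈ ann J U := by
  rw [← ann_sup_inf_comap hJ2 hJiso hU hcoiso] at hu
  obtain ⟨a, ha, w, hw, rfl⟩ := mem_sup.1 hu
  rwa [map_add, apply_eq_zero_of_mem_ann hJiso hker ha,
    apply_eq_self_of_mem_inf_comap hP hrange hw, zero_add, add_sub_cancel_right]

end Projection

theorem inner_apply_map_eq_of_sub_mem_ann (hJ2 : ∀ x, J (J x) = -x)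
    (hJiso : ∀ x y, ⟪J x, J y⟫ = ⟪x, y⟫) {U : Submodule ℝ X} (hcoiso : ann J U ≤ U) {p : X → X} (hp : ∀ u ∈ U, u - p u ∈ ann J U)
    {u v : X} (hu : u ∈ U) (hv : v ∈ U) : ⟪J (p u), p v⟫ = ⟪J u, v⟫ := by
  have h₁ : ⟪J (u - p u), v - (v - p v)⟫ = 0 :=
    mem_ann.1 (hp u hu) _ (U.sub_mem hv (hcoiso (hp v hv)))
  have h₂ : ⟪J u, v - p v⟫ = 0 := inner_apply_eq_zero_of_mem_ann hJ2 hJiso hu (hp v hv)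
  calc ⟪J (p u), p v⟫ = ⟪J (u - (u - p u)), v - (v - p v)⟫ := by
        rw [sub_sub_cancel, sub_sub_cancel]
    _ = ⟪J u, v⟫ - ⟪J u, v - p v⟫ - ⟪J (u - p u), v - (v - p v)⟫ := by
      rw [map_sub, inner_sub_left, inner_sub_right]
    _ = ⟪J u, v⟫ := by rw [h₁, h₂, sub_zero, sub_zero]

end ComplexStructure

end

open ComplexStructure

theorem symplectic_reduction_general
    {X : Type*} [NormedAddCommGroup X] [InnerProductSpace ℝ X] [CompleteSpace X]
    -- the compatible complex structure of the strongly symplectic Hilbert space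
    (J : X →L[ℝ] X)
    (hJ2 : ∀ x, J (J x) = -x)
    (hJiso : ∀ x y, ⟪J x, J y⟫ = ⟪x, y⟫)
    -- `U` is a closed coisotropic subspace: `Ann U ⊆ U`
    (U : Submodule ℝ X) (hUc : IsClosed (U : Set X))
    (hcoiso : Uᗮ.comap (J : X →ₗ[ℝ] X) ≤ U)
    -- `L` is a Lagrangian subspace: `L = Ann L`
    (L : Submodule ℝ X) (hLag : L = Lᗮ.comap (J : X →ₗ[ℝ] X))
    -- `L + Ann U` is closed
    (hclosed : IsClosed ((L ⊔ Uᗮ.comap (J : X →ₗ[ℝ] X) : Submodule ℝ X) : Set X)) :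
    -- `W := U ∩ JU` is a strongly symplectic Hilbert space:
    -- it is `J`-invariant and `ω` is nondegenerate on it,
    (∀ x ∈ U ⊓ U.map (J : X →ₗ[ℝ] X), J x ∈ U ⊓ U.map (J : X →ₗ[ℝ] X)) ∧
    (∀ x ∈ U ⊓ U.map (J : X →ₗ[ℝ] X), (∀ y ∈ U ⊓ U.map (J : X →ₗ[ℝ] X), ⟪J x, y⟫ = 0) → x = 0) ∧
    -- and the image of `L ∩ U` under the orthogonal projection `P` onto `W`
    -- is a Lagrangian subspace of `W`
    ∀ P : X →L[ℝ] X, IsIdempotentElem P →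
      LinearMap.range (P : X →ₗ[ℝ] X) = U ⊓ U.map (J : X →ₗ[ℝ] X) → LinearMap.ker (P : X →ₗ[ℝ] X) = (U ⊓ U.map (J : X →ₗ[ℝ] X))ᗮ →
      ((L ⊓ U).map (P : X →ₗ[ℝ] X) ≤ U ⊓ U.map (J : X →ₗ[ℝ] X) ∧
        ∀ w ∈ U ⊓ U.map (J : X →ₗ[ℝ] X),
          (w ∈ (L ⊓ U).map (P : X →ₗ[ℝ] X) ↔ ∀ s ∈ (L ⊓ U).map (P : X →ₗ[ℝ] X), ⟪J w, s⟫ = 0)) := by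
  rw [map_eq_comap hJ2 U]
  refine ⟨fun x hx => apply_mem_inf_comap hJ2 hx,
    fun x hx h => eq_zero_of_forall_inner_apply_eq_zero hJ2 (apply_mem_inf_comap hJ2 hx) h,
    fun P hP hrange hker => ?_⟩
  have hPU : ∀ u ∈ U, u - P u ∈ ann J U := fun u hu =>
    sub_apply_mem_ann hJ2 hJiso hUc hcoiso hP hrange hker hu
  have hω : ∀ u ∈ U, ∀ v ∈ U, ⟪J (P u), P v⟫ = ⟪J u, v⟫ := fun u hu v hv =>
    inner_apply_map_eq_of_sub_mem_ann hJ2 hJiso hcoiso hPU hu hv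
  refine ⟨?_, fun w hw => ⟨?_, fun h => ?_⟩⟩
  · rintro _ ⟨x, -, rfl⟩
    exact hrange ▸ LinearMap.mem_range_self _ x
  · rintro ⟨l, ⟨hlL, hlU⟩, rfl⟩ _ ⟨m, ⟨hmL, hmU⟩, rfl⟩
    rw [ContinuousLinearMap.coe_coe, hω l hlU m hmU]
    exact mem_ann.1 (hLag.le hlL) m hmL
  · have hw_ann : w ∈ ann J (L ⊓ U) := mem_ann.2 fun l hl => by
      rw [← hω w hw.1 l hl.2, apply_eq_self_of_mem_inf_comap hP hrange hw]
      exact h _ ⟨l, hl, rfl⟩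
    rw [ann_inf_eq_sup_ann hJ2 hJiso hUc hLag hclosed] at hw_ann
    obtain ⟨l, hlL, a, ha, rfl⟩ := mem_sup.1 hw_ann
    have hlU : l ∈ U := by simpa using U.sub_mem hw.1 (hcoiso ha)
    refine ⟨l, ⟨hlL, hlU⟩, ?_⟩
    rw [ContinuousLinearMap.coe_coe, ← apply_eq_self_of_mem_inf_comap hP hrange hw, map_add,
      apply_eq_zero_of_mem_ann hJiso hker ha, add_zero]

theorem symplectic_reduction
    {X : Type*} [NormedAddCommGroup X] [InnerProductSpace ℝ X] [CompleteSpace X]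
    -- the compatible complex structure of the strongly symplectic Hilbert space
    (J : X →L[ℝ] X)
    (hJ2 : ∀ x, J (J x) = -x)
    (hJiso : ∀ x y, ⟪J x, J y⟫ = ⟪x, y⟫)
    (hJskew : ∀ x y, ⟪J x, y⟫ = -⟪x, J y⟫)
    -- `U` is a closed coisotropic subspace: `Ann U ⊆ U`
    (U : Submodule ℝ X) (hUc : IsClosed (U : Set X))
    (hcoiso : Uᗮ.comap (J : X →ₗ[ℝ] X) ≤ U)
    -- `L` is a Lagrangian subspace: `L = Ann L`
    (L : Submodule ℝ X) (hLag : L = Lᗮ.comap (J : X →ₗ[ℝ] X))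
    -- `L + Ann U` is closed
    (hclosed : IsClosed ((L ⊔ Uᗮ.comap (J : X →ₗ[ℝ] X) : Submodule ℝ X) : Set X)) :
    -- `W := U ∩ JU` is a strongly symplectic Hilbert space:
    -- it is `J`-invariant and `ω` is nondegenerate on it,
    (∀ x ∈ U ⊓ U.map (J : X →ₗ[ℝ] X), J x ∈ U ⊓ U.map (J : X →ₗ[ℝ] X)) ∧
    (∀ x ∈ U ⊓ U.map (J : X →ₗ[ℝ] X), (∀ y ∈ U ⊓ U.map (J : X →ₗ[ℝ] X), ⟪J x, y⟫ = 0) → x = 0) ∧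
    -- and the image of `L ∩ U` under the orthogonal projection `P` onto `W`
    -- is a Lagrangian subspace of `W`
    ∀ P : X →L[ℝ] X, IsIdempotentElem P →
      LinearMap.range (P : X →ₗ[ℝ] X) = U ⊓ U.map (J : X →ₗ[ℝ] X) → LinearMap.ker (P : X →ₗ[ℝ] X) = (U ⊓ U.map (J : X →ₗ[ℝ] X))ᗮ →
      ((L ⊓ U).map (P : X →ₗ[ℝ] X) ≤ U ⊓ U.map (J : X →ₗ[ℝ] X) ∧
        ∀ w ∈ U ⊓ U.map (J : X →ₗ[ℝ] X),
          (w ∈ (L ⊓ U).map (P : X →ₗ[ℝ] X) ↔ ∀ s ∈ (L ⊓ U).map (P : X →ₗ[ℝ] X), ⟪J w, s⟫ = 0)) :=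
  symplectic_reduction_general J hJ2 hJiso U hUc hcoiso L hLag hclosed
end
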